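/- Let 1 ≤ p < ∞, let A : ℝ → ℝ be A(x) = αx with α a nonzero integer, and let Λ be a summability kernel for L^p(ℝ) multipliers. Then Λ ∘ A is also a summability kernel for L^p(ℝ) multipliers. -/

import Mathlib

open MeasureTheory Complex Real FourierTransform Filter

theorem Real.fact_zero_lt_one : Fact ((0 : ℝ) < 1) :=
  ⟨zero_lt_one⟩

attribute [local instance] Real.fact_zero_lt_one

noncomputable section

/-- `m : ℝ → ℂ` is a Fourier multiplier of `L^p(ℝ)` with constant `C`:
for every `f ∈ L¹ ∩ L^p` whose image `m · 𝓕 f` is integrable, the inverse Fourier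
transform of `m · 𝓕 f` has `L^p` norm at most `C` times that of `f`. -/
def IsMultiplierR (p : ℝ) (m : ℝ → ℂ) (C : ℝ) : Prop :=
  ∀ f : ℝ → ℂ, Integrable f volume → MemLp f (ENNReal.ofReal p) volume →
    Integrable (fun ξ => m ξ * 𝓕 f ξ) volume →
    eLpNorm (𝓕⁻ (fun ξ => m ξ * 𝓕 f ξ)) (ENNReal.ofReal p) volume ≤
      ENNReal.ofReal C * eLpNorm f (ENNReal.ofReal p) volume

/-- `φ : ℤ → ℂ` is a Fourier multiplier of `L^p(𝕋)` with constant `C`, tested on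
trigonometric polynomials. -/
def IsMultiplierT (p : ℝ) (φ : ℤ → ℂ) (C : ℝ) : Prop :=
  ∀ a : ℤ → ℂ, (Function.support a).Finite →
    eLpNorm (fun t : AddCircle (1 : ℝ) => ∑' n : ℤ, φ n * a n * fourier n t)
        (ENNReal.ofReal p) volume ≤
      ENNReal.ofReal C *
        eLpNorm (fun t : AddCircle (1 : ℝ) => ∑' n : ℤ, a n * fourier n t)
          (ENNReal.ofReal p) volume

/-- `Λ` is a summability kernel for `L^p(ℝ)` multipliers with constant `C`. -/
def SummabilityKernel (p : ℝ) (Λ : ℝ → ℂ) (C : ℝ) : Prop :=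
  ∀ φ : ℤ → ℂ, ∀ Cφ : ℝ, 0 ≤ Cφ → IsMultiplierT p φ Cφ →
    (∀ᵐ ξ : ℝ ∂volume, Summable fun n : ℤ => φ n * Λ (ξ - (n : ℝ))) ∧
    IsMultiplierR p (fun ξ => ∑' n : ℤ, φ n * Λ (ξ - (n : ℝ))) (C * Cφ)

end

/-!
Upsampling `φ` to `ψ m = φ (m / α)` on `αℤ` (and `0` off it) keeps it an `L^p(𝕋)` multiplier with
the same constant. Indeed, multiplying by `ψ` first restricts the frequencies to `αℤ`, which is the
average of `|α|` translates and hence an `L^p` contraction for `p ≥ 1`, and then applies `φ` to a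
polynomial in `αt`; since `t ↦ α • t` preserves Haar measure on the circle, that costs no more than
applying `φ` to the undilated polynomial. On the line, `∑ φ n Λ (α (ξ - n)) = ∑ ψ m Λ (α ξ - m)` is
the series of `Λ` against `ψ` evaluated at `α ξ`, and dilations preserve multiplier norms on `ℝ`.
So `Λ (α ·)` is a summability kernel with the same constant as `Λ`.
-/
namespace Real

variable {E : Type*} [NormedAddCommGroup E] [NormedSpace ℂ E] {c : ℝ}

theorem fourier_comp_mul_left (f : ℝ → E) (hc : c ≠ 0) (ξ : ℝ) :
    𝓕 (fun x => f (c * x)) ξ = |c⁻¹| • 𝓕 f (c⁻¹ * ξ) := by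
  rw [fourier_real_eq, fourier_real_eq,
    ← Measure.integral_comp_mul_left (fun v => 𝐞 (-(v * (c⁻¹ * ξ))) • f v) c]
  congr 1 with x
  field_simp

theorem fourierInv_comp_mul_left (f : ℝ → E) (hc : c ≠ 0) (x : ℝ) :
    𝓕⁻ (fun ξ => f (c * ξ)) x = |c⁻¹| • 𝓕⁻ f (c⁻¹ * x) := by
  rw [fourierInv_eq_fourier_neg, fourierInv_eq_fourier_neg, fourier_comp_mul_left f hc, mul_neg]

theorem fourierInv_const_smul (r : ℂ) (f : ℝ → E) :
    𝓕⁻ (fun ξ => r • f ξ) = r • 𝓕⁻ f :=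
  VectorFourier.fourierIntegral_const_smul _ _ _ f r

end Real

section Dilation

variable {E : Type*} [NormedAddCommGroup E] {c : ℝ}

theorem eLpNorm_comp_mul_left (u : ℝ → E) {q : ENNReal} (hq : q ≠ ⊤) (hc : c ≠ 0) :
    eLpNorm (fun x => u (c * x)) q volume
      = ENNReal.ofReal |c⁻¹| ^ (1 / q).toReal * eLpNorm u q volume := by
  rw [← smul_eq_mul, ← eLpNorm_smul_measure_of_ne_top hq, ← Real.map_volume_mul_left hc,
    (measurableEmbedding_mulLeft₀ hc).eLpNorm_map_measure]
  rfl

theorem MeasureTheory.MemLp.comp_mul_left {u : ℝ → E} {q : ENNReal} (hu : MemLp u q volume)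
    (hc : c ≠ 0) : MemLp (fun x => u (c * x)) q volume := by
  have := hu.smul_measure (c := ENNReal.ofReal |c⁻¹|) ENNReal.ofReal_ne_top
  rw [← Real.map_volume_mul_left hc,
    (measurableEmbedding_mulLeft₀ hc).memLp_map_measure_iff] at this
  exact this

theorem IsMultiplierR.comp_mul_left {p : ℝ} {m : ℝ → ℂ} {K : ℝ} (hm : IsMultiplierR p m K)
    (hc : c ≠ 0) : IsMultiplierR p (fun ξ => m (c * ξ)) K := by
  intro f hf hfp hmf
  set G := fun ξ => m (c * ξ) * 𝓕 f ξ
  set g := fun x => f (c * x)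
  have hmg : (fun ξ => m ξ * 𝓕 g ξ) = fun ξ => ((|c⁻¹| : ℝ) : ℂ) • G (c⁻¹ * ξ) := by
    ext ξ
    simp only [g, G, Real.fourier_comp_mul_left f hc, mul_inv_cancel_left₀ hc, Complex.real_smul,
      smul_eq_mul]
    ring
  have hinv : 𝓕⁻ (fun ξ => m ξ * 𝓕 g ξ) = fun x => 𝓕⁻ G (c * x) := by
    ext x
    rw [hmg, Real.fourierInv_const_smul, Pi.smul_apply,
      Real.fourierInv_comp_mul_left G (inv_ne_zero hc), inv_inv, Complex.real_smul, smul_eq_mul,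
      ← mul_assoc, ← Complex.ofReal_mul, ← abs_mul, inv_mul_cancel₀ hc]
    simp
  have hq : ENNReal.ofReal p ≠ ⊤ := ENNReal.ofReal_ne_top
  have hκ0 : ENNReal.ofReal |c⁻¹| ^ (1 / ENNReal.ofReal p).toReal ≠ 0 := by
    positivity
  have hκ : ENNReal.ofReal |c⁻¹| ^ (1 / ENNReal.ofReal p).toReal ≠ ⊤ := by
    finiteness
  -- Tested on `g = f (c ·)`, both sides of the bound for `m` scale by the same `|c|^(-1/p)`.
  have key := hm g (hf.comp_mul_left' hc) (hfp.comp_mul_left hc)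
    (by rw [hmg]; exact (hmf.comp_mul_left' (inv_ne_zero hc)).smul ((|c⁻¹| : ℝ) : ℂ))
  rw [hinv, eLpNorm_comp_mul_left _ hq hc, eLpNorm_comp_mul_left _ hq hc, mul_left_comm] at key
  exact (ENNReal.mul_le_mul_iff_right hκ0 hκ).1 key

end Dilation

section Upsample

variable {M : Type*} [Zero M] {α : ℤ}

def upsample (α : ℤ) (b : ℤ → M) (m : ℤ) : M :=
  if α ∣ m then b (m / α) else 0

theorem upsample_mul_self (hα : α ≠ 0) (b : ℤ → M) (n : ℤ) : upsample α b (α * n) = b n := by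
  simp [upsample, Int.mul_ediv_cancel_left n hα]

theorem support_upsample_subset (b : ℤ → M) :
    Function.support (upsample α b) ⊆ Set.range (α * ·) := by
  intro m hm
  by_contra hdvd
  exact hm (if_neg fun ⟨n, hn⟩ => hdvd ⟨n, hn.symm⟩)

variable {R : Type*} [NonUnitalNonAssocSemiring R]

theorem tsum_upsample_mul [TopologicalSpace R] (hα : α ≠ 0) (b g : ℤ → R) :
    ∑' m, upsample α b m * g m = ∑' n, b n * g (α * n) := by
  rw [← (mul_right_injective₀ hα).tsum_eq]
  · simp only [upsample_mul_self hα]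
  · exact (Function.support_mul_subset_left _ _).trans (support_upsample_subset b)

theorem summable_upsample_mul_iff [TopologicalSpace R] (hα : α ≠ 0) (b g : ℤ → R) :
    Summable (fun m => upsample α b m * g m) ↔ Summable (fun n => b n * g (α * n)) := by
  rw [← (mul_right_injective₀ hα).summable_iff]
  · simp only [Function.comp_def, upsample_mul_self hα]
  · intro m hm
    rw [Function.notMem_support.1 fun h => hm (support_upsample_subset b h), zero_mul]

theorem upsample_mul_comp (b a : ℤ → R) :
    upsample α (b * fun n => a (α * n)) = upsample α b * a := by
  ext m
  by_cases hdvd : α ∣ m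
  · simp [upsample, hdvd, Int.mul_ediv_cancel' hdvd]
  · simp [upsample, hdvd]

theorem upsample_comp_mul (a : ℤ → M) :
    upsample α (fun n => a (α * n)) = fun m => if α ∣ m then a m else 0 := by
  ext m
  by_cases hdvd : α ∣ m
  · simp [upsample, hdvd, Int.mul_ediv_cancel' hdvd]
  · simp [upsample, hdvd]

end Upsample

section TrigPoly

variable {T : ℝ}

theorem fourier_add_apply (n : ℤ) (x y : AddCircle T) :
    fourier n (x + y) = fourier n x * fourier n y := by
  rw [fourier_apply, fourier_apply, fourier_apply, smul_add, AddCircle.toCircle_add,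
    Circle.coe_mul]

theorem fourier_zsmul_apply (n k : ℤ) (t : AddCircle T) :
    fourier n (k • t) = fourier (k * n) t := by
  rw [fourier_apply, fourier_apply, smul_smul, mul_comm n k]

noncomputable def trigPoly (a : ℤ → ℂ) (t : AddCircle T) : ℂ :=
  ∑' n, a n * fourier n t

theorem trigPoly_eq_sum {a : ℤ → ℂ} {s : Finset ℤ} (hs : ∀ n ∉ s, a n = 0) (t : AddCircle T) :
    trigPoly a t = ∑ n ∈ s, a n * fourier n t :=
  tsum_eq_sum fun n hn => by rw [hs n hn, zero_mul]

theorem continuous_trigPoly {a : ℤ → ℂ} (ha : (Function.support a).Finite) :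
    Continuous (trigPoly (T := T) a) := by
  rw [funext (trigPoly_eq_sum (s := ha.toFinset) (by simp))]
  fun_prop

theorem trigPoly_upsample {α : ℤ} (hα : α ≠ 0) (b : ℤ → ℂ) (t : AddCircle T) :
    trigPoly (upsample α b) t = trigPoly b (α • t) := by
  simp only [trigPoly, tsum_upsample_mul hα, fourier_zsmul_apply]

variable [Fact (0 < T)]

theorem sum_fourier_nsmul_period_div {k : ℕ} (hk : 0 < k) (m : ℤ) :
    ∑ j ∈ Finset.range k, fourier m (j • ((T / k : ℝ) : AddCircle T)) =
      if (k : ℤ) ∣ m then (k : ℂ) else 0 := by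
  set x₀ : AddCircle T := ((T / k : ℝ) : AddCircle T)
  have hpow (j : ℕ) : fourier m (j • x₀) = fourier m x₀ ^ j := by
    rw [fourier_apply, fourier_apply, smul_comm, AddCircle.toCircle_nsmul, Circle.coe_pow]
  have hone : fourier m x₀ = 1 ↔ (k : ℤ) ∣ m := by
    rw [← AddCircle.addOrderOf_period_div (p := T) hk, addOrderOf_dvd_iff_zsmul_eq_zero,
      fourier_apply, Circle.coe_eq_one, ← AddCircle.toCircle_zero,
      (AddCircle.injective_toCircle (Fact.out : 0 < T).ne').eq_iff]
  simp_rw [hpow]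
  split_ifs with hdvd
  · simp [hone.2 hdvd]
  · rw [geom_sum_eq (mt hone.1 hdvd), ← hpow, ← AddCircle.addOrderOf_period_div (p := T) hk,
      addOrderOf_nsmul_eq_zero, fourier_eval_zero, sub_self, zero_div]

theorem trigPoly_ite_dvd_eq_average {a : ℤ → ℂ} (ha : (Function.support a).Finite) {k : ℕ}
    (hk : 0 < k) (t : AddCircle T) :
    trigPoly (fun m => if (k : ℤ) ∣ m then a m else 0) t =
      (k : ℂ)⁻¹ * ∑ j ∈ Finset.range k, trigPoly a (t + j • ((T / k : ℝ) : AddCircle T)) := by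
  have hs : ∀ n ∉ ha.toFinset, a n = 0 := by simp
  rw [trigPoly_eq_sum (s := ha.toFinset) (by intro n hn; simp [hs n hn])]
  simp only [trigPoly_eq_sum hs, fourier_add_apply]
  rw [Finset.sum_comm, Finset.mul_sum]
  refine Finset.sum_congr rfl fun m _ => ?_
  simp_rw [← mul_assoc, ← Finset.mul_sum, sum_fourier_nsmul_period_div hk]
  have : (k : ℂ) ≠ 0 := by exact_mod_cast hk.ne'
  split_ifs
  · field_simp
  · simp

theorem eLpNorm_trigPoly_ite_dvd_le {μ : Measure (AddCircle T)} [μ.IsAddRightInvariant]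
    {a : ℤ → ℂ} (ha : (Function.support a).Finite) {α : ℤ} (hα : α ≠ 0) {q : ENNReal}
    (hq : 1 ≤ q) :
    eLpNorm (trigPoly fun m => if α ∣ m then a m else 0) q μ ≤ eLpNorm (trigPoly a) q μ := by
  obtain ⟨k, hk, hαk⟩ : ∃ k : ℕ, 0 < k ∧ ∀ m, α ∣ m ↔ (k : ℤ) ∣ m :=
    ⟨α.natAbs, Int.natAbs_pos.2 hα, fun m => Int.natAbs_dvd.symm⟩
  let τ (j : ℕ) (t : AddCircle T) : ℂ := trigPoly a (t + j • ((T / k : ℝ) : AddCircle T))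
  have hτ (j : ℕ) : eLpNorm (τ j) q μ = eLpNorm (trigPoly a) q μ :=
    eLpNorm_comp_measurePreserving (g := trigPoly a) (f := (· + _))
      (continuous_trigPoly ha).aestronglyMeasurable (measurePreserving_add_right μ _)
  have havg : (trigPoly fun m => if α ∣ m then a m else 0) =
      (k : ℂ)⁻¹ • ∑ j ∈ Finset.range k, τ j := by
    ext t
    simp only [hαk, trigPoly_ite_dvd_eq_average ha hk, Pi.smul_apply, Finset.sum_apply,
      smul_eq_mul, τ]
  calc eLpNorm (trigPoly fun m => if α ∣ m then a m else 0) q μ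
      ≤ ‖(k : ℂ)⁻¹‖ₑ * ∑ j ∈ Finset.range k, eLpNorm (τ j) q μ := by
        rw [havg, eLpNorm_const_smul]
        gcongr
        exact eLpNorm_sum_le (fun j _ =>
          ((continuous_trigPoly ha).comp (continuous_add_const _)).aestronglyMeasurable) hq
    _ = eLpNorm (trigPoly a) q μ := by
        simp only [hτ, Finset.sum_const, Finset.card_range, nsmul_eq_mul, ← mul_assoc]
        rw [enorm_inv (by exact_mod_cast hk.ne'), ← ofReal_norm, Complex.norm_natCast,
          ENNReal.ofReal_natCast, ENNReal.inv_mul_cancel (by exact_mod_cast hk.ne') (by simp),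
          one_mul]

theorem eLpNorm_trigPoly_upsample {b : ℤ → ℂ} (hb : (Function.support b).Finite) {α : ℤ}
    (hα : α ≠ 0) (q : ENNReal) :
    eLpNorm (trigPoly (T := T) (upsample α b)) q volume =
      eLpNorm (trigPoly (T := T) b) q volume := by
  rw [funext (trigPoly_upsample hα b)]
  exact eLpNorm_comp_measurePreserving (g := trigPoly b) (f := (α • ·))
    (continuous_trigPoly hb).aestronglyMeasurable (Measure.measurePreserving_zsmul volume hα)

end TrigPoly

theorem isMultiplierT_upsample {p : ℝ} (hp : 1 ≤ p) {φ : ℤ → ℂ} {K : ℝ}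
    (hφ : IsMultiplierT p φ K) {α : ℤ} (hα : α ≠ 0) : IsMultiplierT p (upsample α φ) K := by
  intro a ha
  set b := fun n => a (α * n)
  have hb : (Function.support b).Finite := ha.preimage (mul_right_injective₀ hα).injOn
  have hq : 1 ≤ ENNReal.ofReal p := by simpa using ENNReal.ofReal_le_ofReal hp
  show eLpNorm (trigPoly (T := 1) (upsample α φ * a)) _ _ ≤ _ * eLpNorm (trigPoly a) _ _
  calc eLpNorm (trigPoly (upsample α φ * a)) (ENNReal.ofReal p) volume
      = eLpNorm (trigPoly (φ * b)) (ENNReal.ofReal p) volume := by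
        rw [← upsample_mul_comp]
        exact eLpNorm_trigPoly_upsample (b := φ * b)
          (hb.subset (Function.support_mul_subset_right φ b)) hα _
    _ ≤ ENNReal.ofReal K * eLpNorm (trigPoly b) (ENNReal.ofReal p) volume := hφ b hb
    _ = ENNReal.ofReal K * eLpNorm (trigPoly fun m => if α ∣ m then a m else 0)
          (ENNReal.ofReal p) volume := by
        rw [← upsample_comp_mul, eLpNorm_trigPoly_upsample (T := 1) hb hα]
    _ ≤ ENNReal.ofReal K * eLpNorm (trigPoly a) (ENNReal.ofReal p) volume := by
        gcongr
        exact eLpNorm_trigPoly_ite_dvd_le (T := 1) (μ := volume) ha hα hq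

/-- If `Λ` is a summability kernel for `L^p(ℝ)` multipliers and `A(x) = αx` with
`α` a nonzero integer, then `Λ ∘ A` is also a summability kernel for `L^p(ℝ)`
multipliers. -/
theorem stmt18 (p : ℝ) (hp : 1 ≤ p) (α : ℤ) (hα : α ≠ 0) (Λ : ℝ → ℂ) (C : ℝ)
    (h : SummabilityKernel p Λ C) :
    ∃ C' : ℝ, SummabilityKernel p (fun ξ => Λ ((α : ℝ) * ξ)) C' := by
  refine ⟨C, fun φ Cφ hCφ hφ => ?_⟩
  have hαR : (α : ℝ) ≠ 0 := Int.cast_ne_zero.2 hα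
  obtain ⟨hsumm, hmult⟩ := h (upsample α φ) Cφ hCφ (isMultiplierT_upsample hp hφ hα)
  have hshift (ξ : ℝ) (n : ℤ) : (α : ℝ) * ξ - ((α * n : ℤ) : ℝ) = α * (ξ - n) := by
    push_cast; ring
  refine ⟨?_, ?_⟩
  · filter_upwards [(Measure.quasiMeasurePreserving_smul volume hαR).ae hsumm] with ξ hξ
    simpa only [smul_eq_mul, summable_upsample_mul_iff hα, hshift] using hξ
  · have hW : (fun ξ => ∑' n : ℤ, φ n * Λ (α * (ξ - n))) =
        fun ξ => ∑' m : ℤ, upsample α φ m * Λ (α * ξ - m) := by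
      ext ξ
      simp only [tsum_upsample_mul hα, hshift]
    simpa only [hW] using hmult.comp_mul_left hαR
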